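/- arXiv:1201.4105 — 6 statements merged into one kernel-verified Lean document; each statement's English description precedes it below -/
import Mathlib

section
/- Let F ⊆ L be fields with F algebraically closed in L, and let θ be an element separable algebraic over F with F(θ) and L contained in a common field. Then F(θ) is algebraically closed in L(θ). -/
/-!
An element `x ∈ L(θ)` algebraic over `F(θ)` is integral over `F`. Write `x = ∑ cᵢ θ^i` with
`cᵢ ∈ L`. The trace of `L(θ)/L` maps elements integral over `F` to elements of `L` integral over
`F`, i.e. into `F`; so the trace matrix `(Tr(θ^i θ^j))` and the vector `(Tr(x θ^j))` have entries
in `F`. By separability the trace matrix is invertible, and the coordinates `cᵢ` solve the linear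
system it defines, hence lie in `F`.
-/

open IntermediateField Matrix

theorem Matrix.mem_subfield_of_mulVec_mem {L n : Type*} [Field L] [Fintype n] [DecidableEq n]
    (S : Subfield L) {T : Matrix n n L} (hT : ∀ i j, T i j ∈ S) (hdet : T.det ≠ 0) {c : n → L}
    (hc : ∀ i, (T *ᵥ c) i ∈ S) (i : n) : c i ∈ S := by
  set T' : Matrix n n S := .of fun i j => ⟨T i j, hT i j⟩
  have hT' : T'.map S.subtype = T := rfl
  have hdet' : T'.det ≠ 0 := fun h => hdet <| by
    rw [← hT', ← RingHom.mapMatrix_apply, ← RingHom.map_det, h, map_zero]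
  set w : n → S := fun i => ⟨_, hc i⟩
  suffices c = S.subtype ∘ (T'⁻¹ *ᵥ w) by rw [this]; exact Subtype.prop _
  apply mulVec_injective_of_det_ne_zero hdet
  ext j
  rw [← hT', ← RingHom.map_mulVec, mulVec_mulVec, mul_nonsing_inv _ (isUnit_iff_ne_zero.2 hdet'),
    one_mulVec, hT']
  rfl

section

variable {F L E : Type*} [Field F] [Field L] [Field E] [Algebra F L] [Algebra F E] [Algebra L E]
  [IsScalarTower F L E] [IsIntegrallyClosedIn F L]

theorem Module.Basis.repr_mem_fieldRange_of_isIntegral [FiniteDimensional L E]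
    [Algebra.IsSeparable L E] {ι : Type*} [Fintype ι] [DecidableEq ι] (b : Module.Basis ι L E)
    (hb : ∀ i, IsIntegral F (b i))
    {x : E} (hx : IsIntegral F x) (i : ι) : b.repr x i ∈ (algebraMap F L).fieldRange := by
  have trace_mem : ∀ y : E, IsIntegral F y → Algebra.trace L E y ∈ (algebraMap F L).fieldRange :=
    fun y hy => IsIntegrallyClosedIn.isIntegral_iff.mp (Algebra.isIntegral_trace hy)
  rw [← b.equivFun_apply]
  refine Matrix.mem_subfield_of_mulVec_mem _ (T := Algebra.traceMatrix L b)
    (fun i j => trace_mem _ ((hb i).mul (hb j))) (Algebra.discr_not_zero_of_basis L b) ?_ i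
  rw [Algebra.traceMatrix_of_basis_mulVec]
  exact fun j => trace_mem _ (hx.mul (hb j))

theorem IntermediateField.mem_adjoin_simple_of_isAlgebraic {θ : E} (hθ : IsIntegral F θ)
    (hθsep : IsSeparable F θ) {x : E} (hx : x ∈ L⟮θ⟯) (hxalg : IsAlgebraic F⟮θ⟯ x) : x ∈ F⟮θ⟯ := by
  have hxint : IsIntegral F x := by
    have : FiniteDimensional F F⟮θ⟯ := adjoin.finiteDimensional hθ
    exact (hxalg.restrictScalars_of_isIntegral F).isIntegral
  have hθL : IsIntegral L θ := hθ.tower_top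
  have : Algebra.IsSeparable L L⟮θ⟯ :=
    (isSeparable_adjoin_simple_iff_isSeparable L E).2 (hθsep.tower_top L)
  have : FiniteDimensional L L⟮θ⟯ := adjoin.finiteDimensional hθL
  set pb := adjoin.powerBasis hθL
  have hpb : ∀ i, (pb.basis i : E) = θ ^ (i : ℕ) := fun i => by
    rw [pb.basis_eq_pow, SubmonoidClass.coe_pow, adjoin.powerBasis_gen, AdjoinSimple.coe_gen]
  have isIntegral_coe {y : L⟮θ⟯} : IsIntegral F (y : E) → IsIntegral F y :=
    (isIntegral_algHom_iff (L⟮θ⟯.val.restrictScalars F) Subtype.val_injective).mp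
  have hcoord := pb.basis.repr_mem_fieldRange_of_isIntegral (F := F)
    (fun i => isIntegral_coe (hpb i ▸ hθ.pow _)) (x := ⟨x, hx⟩) (isIntegral_coe hxint)
  rw [show x = ((⟨x, hx⟩ : L⟮θ⟯) : E) from rfl, ← pb.basis.sum_repr ⟨x, hx⟩, coe_sum]
  refine sum_mem fun i _ => ?_
  obtain ⟨f, hf⟩ := hcoord i
  rw [← hf, algebraMap_smul, IntermediateField.coe_smul, hpb]
  exact smul_mem _ (pow_mem (mem_adjoin_simple_self F θ) _)

end

theorem Subfield.closure_union_eq_adjoin_toSubfield {Ω : Type*} [Field Ω] (K : Subfield Ω)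
    (S : Set Ω) : Subfield.closure ((K : Set Ω) ∪ S) = (adjoin K S).toSubfield := by
  rw [adjoin_toSubfield]
  congr 2
  exact Subtype.range_coe.symm

/-- If `F ⊆ L` are subfields of `Ω`, `F` is algebraically closed in `L`, and `θ ∈ Ω` is
separable algebraic over `F`, then `F(θ)` is algebraically closed in `L(θ)`. -/
theorem stmt_1 {Ω : Type*} [Field Ω] (F L : Subfield Ω) (hFL : F ≤ L)
    (hcl : ∀ x ∈ L, IsAlgebraic F x → x ∈ F)
    (θ : Ω) (hθalg : IsAlgebraic F θ) (hθsep : IsSeparable F θ) :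
    ∀ x ∈ Subfield.closure ((L : Set Ω) ∪ {θ}),
      IsAlgebraic (Subfield.closure ((F : Set Ω) ∪ {θ})) x →
        x ∈ Subfield.closure ((F : Set Ω) ∪ {θ}) := by
  let _ : Algebra F L := (Subfield.inclusion hFL).toAlgebra
  have : IsScalarTower F L Ω := .of_algebraMap_eq fun _ => rfl
  have : IsIntegrallyClosedIn F L := isIntegrallyClosedIn_iff.mpr
    ⟨(algebraMap F L).injective, fun {l} hl =>
      ⟨⟨l, hcl l l.2 (hl.map (IsScalarTower.toAlgHom F L Ω)).isAlgebraic⟩, rfl⟩⟩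
  intro x hxL hxalg
  rw [Subfield.closure_union_eq_adjoin_toSubfield] at hxL hxalg ⊢
  exact mem_adjoin_simple_of_isAlgebraic hθalg.isIntegral hθsep hxL hxalg
end

section
/- Let F₀ = 𝔽_p(a) with a transcendental over 𝔽_p, let s, t be algebraically independent over F₀, F = F₀(t), M = F(t^{1/p}), L = F(s, g^{1/p}) where g = a·s^p + t. Then M is not algebraically closed relative to LM; specifically (g^{1/p} − t^{1/p})/s = a^{1/p} lies in LM but a^{1/p} ∉ M. -/
set_option maxHeartbeats 2000000

open MvPolynomial in
/-- Auxiliary: if `a, t` are algebraically independent over `ZMod p` (`p` prime) in a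
field `Ω` of characteristic `p`, then `a` is not in the subfield generated by `a^p` and `t`. -/
theorem aux_notMem_closure (p : ℕ) (hp : p.Prime) {Ω : Type*} [Field Ω] [CharP Ω p]
    [Algebra (ZMod p) Ω] (a t : Ω) (ha0 : a ≠ 0)
    (hind : AlgebraicIndependent (ZMod p) ![a, t]) :
    a ∉ Subfield.closure {a ^ p, t} := by
  haveI := Fact.mk hp
  intro haC
  have hAeval : ∀ P : MvPolynomial (Fin 2) (ZMod p), aeval ![a, t] P = 0 → P = 0 :=
    algebraicIndependent_iff.mp hind
  obtain ⟨y, hy, z, hz, hyz⟩ := Subfield.mem_closure_iff.mp haC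
  have hrange : Subring.closure {a ^ p, t} ≤ (Algebra.adjoin (ZMod p) {a ^ p, t}).toSubring :=
    Subring.closure_le.mpr Algebra.subset_adjoin
  have hradj : Algebra.adjoin (ZMod p) {a ^ p, t}
      = (MvPolynomial.aeval (R := ZMod p) ![a ^ p, t]).range := by
    rw [← Algebra.adjoin_range_eq_range_aeval]
    congr 1
    ext u
    simp only [Set.mem_range, Fin.exists_fin_two, Set.mem_insert_iff, Set.mem_singleton_iff,
      Matrix.cons_val_zero, Matrix.cons_val_one, Matrix.head_cons]
    tauto
  obtain ⟨P, hP⟩ : ∃ P, aeval ![a ^ p, t] P = y := by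
    have := hrange hy
    rw [Subalgebra.mem_toSubring, hradj] at this
    exact this
  obtain ⟨Q, hQ⟩ : ∃ Q, aeval ![a ^ p, t] Q = z := by
    have := hrange hz
    rw [Subalgebra.mem_toSubring, hradj] at this
    exact this
  have hz0 : z ≠ 0 := by
    intro h
    rw [h, div_zero] at hyz
    exact ha0 hyz.symm
  have heq : a * z = y := ((div_eq_iff hz0).mp hyz).symm
  set v : Fin 2 → MvPolynomial (Fin 2) (ZMod p) := ![(X 0) ^ p, X 1] with hv
  have hbind : ∀ R : MvPolynomial (Fin 2) (ZMod p),
      aeval ![a, t] (bind₁ v R) = aeval ![a ^ p, t] R := by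
    intro R
    rw [aeval_bind₁]
    have hfun : (fun i => aeval ![a, t] (v i)) = ![a ^ p, t] := by
      funext i; fin_cases i <;> simp [hv]
    rw [hfun]
  have hpol : (X 0) * bind₁ v Q - bind₁ v P = 0 := by
    apply hAeval
    rw [map_sub, map_mul, hbind, hbind, hP, hQ, aeval_X]
    simp [heq]
  have hQ0 : bind₁ v Q ≠ 0 := by
    intro h
    apply hz0
    rw [← hQ, ← hbind, h, map_zero]
  have hder : ∀ R : MvPolynomial (Fin 2) (ZMod p), pderiv 0 (bind₁ v R) = 0 := by
    intro R
    induction R using MvPolynomial.induction_on with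
    | C r => simp
    | add f g hf hg => simp [map_add, hf, hg]
    | mul_X f i hf =>
      rw [map_mul, bind₁_X_right, pderiv_mul, hf, zero_mul, zero_add]
      fin_cases i
      · simp [hv, pderiv_pow, ZMod.natCast_self]
      · simp [hv, pderiv_X_of_ne]
  have h1 : X 0 * bind₁ v Q = bind₁ v P := sub_eq_zero.mp hpol
  have h2 := congrArg (pderiv (0 : Fin 2)) h1
  rw [pderiv_mul, hder, hder, pderiv_X_self, mul_zero, add_zero, one_mul] at h2
  exact hQ0 h2

/-- Auxiliary: Frobenius maps the subfield generated by `a, t, tp` (with `tp^p = t`)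
into the subfield generated by `a^p` and `t`. -/

theorem aux_pow_mem (p : ℕ) (hp : p.Prime) {Ω : Type*} [Field Ω] [CharP Ω p]
    (a t tp b : Ω) (htp : tp ^ p = t)
    (hbM : b ∈ Subfield.closure {a, t, tp}) :
    b ^ p ∈ Subfield.closure {a ^ p, t} := by
  haveI := Fact.mk hp
  induction hbM using Subfield.closure_induction with
  | mem x hx =>
    rw [Set.mem_insert_iff, Set.mem_insert_iff, Set.mem_singleton_iff] at hx
    rcases hx with h | h | h <;> rw [h]
    · exact Subfield.subset_closure (Set.mem_insert _ _)
    · have hmem : t ∈ Subfield.closure {a ^ p, t} :=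
        Subfield.subset_closure (Set.mem_insert_of_mem _ rfl)
      exact pow_mem hmem p
    · rw [htp]
      exact Subfield.subset_closure (Set.mem_insert_of_mem _ rfl)
  | one => rw [one_pow]; exact one_mem _
  | add x y hx hy ihx ihy => rw [add_pow_char]; exact add_mem ihx ihy
  | neg x hx ihx => rw [neg_pow, neg_one_pow_char Ω]; rw [neg_mul, one_mul]; exact neg_mem ihx
  | inv x hx ihx => rw [inv_pow]; exact inv_mem ihx
  | mul x y hx hy ihx ihy => rw [mul_pow]; exact mul_mem ihx ihy

/-- The inseparable counterexample: with `F₀ = 𝔽_p(a)`, `s, t` algebraically independent over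
`F₀`, `F = F₀(t)`, `M = F(t^{1/p})` and `L = F(s, g^{1/p})` where `g = a·s^p + t`, the element
`(g^{1/p} - t^{1/p})/s` is a `p`-th root of `a` lying in `LM` but not in `M`; in particular
`M` is not algebraically closed relative to `LM`. -/
theorem stmt_3 (p : ℕ) (hp : p.Prime) {Ω : Type*} [Field Ω] [CharP Ω p]
    (a s t tp gp : Ω)
    (hind : AlgebraicIndependent (↥(⊥ : Subfield Ω)) ![a, s, t])
    (htp : tp ^ p = t) (hgp : gp ^ p = a * s ^ p + t)
    (F : Subfield Ω) (hF : F = Subfield.closure {a, t})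
    (M : Subfield Ω) (hM : M = Subfield.closure {a, t, tp})
    (L : Subfield Ω) (hL : L = Subfield.closure {a, t, s, gp}) :
    ((gp - tp) / s) ^ p = a ∧
      (gp - tp) / s ∈ L ⊔ M ∧
      (gp - tp) / s ∉ M ∧
      ¬ (∀ x ∈ L ⊔ M, IsAlgebraic M x → x ∈ M) := by
  haveI := Fact.mk hp
  have hA : ∀ P : MvPolynomial (Fin 3) ↥(⊥ : Subfield Ω),
      MvPolynomial.aeval ![a, s, t] P = 0 → P = 0 := algebraicIndependent_iff.mp hind
  have hs0 : s ≠ 0 := by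
    intro h
    exact MvPolynomial.X_ne_zero (R := ↥(⊥ : Subfield Ω)) (1 : Fin 3)
      (hA (MvPolynomial.X 1) (by simp [h]))
  have ha0 : a ≠ 0 := by
    intro h
    exact MvPolynomial.X_ne_zero (R := ↥(⊥ : Subfield Ω)) (0 : Fin 3)
      (hA (MvPolynomial.X 0) (by simp [h]))
  have key : ((gp - tp) / s) ^ p = a := by
    have hnum : (gp - tp) ^ p = a * s ^ p := by rw [sub_pow_char, htp, hgp]; ring
    rw [div_pow, hnum, mul_div_assoc, div_self (pow_ne_zero _ hs0), mul_one]
  -- membership in L ⊔ M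
  have hgpL : gp ∈ L := hL ▸ Subfield.subset_closure (by simp)
  have hsL : s ∈ L := hL ▸ Subfield.subset_closure (by simp)
  have htpM : tp ∈ M := hM ▸ Subfield.subset_closure (by simp)
  have memLM : (gp - tp) / s ∈ L ⊔ M :=
    div_mem (sub_mem ((le_sup_left : L ≤ L ⊔ M) hgpL) ((le_sup_right : M ≤ L ⊔ M) htpM))
      ((le_sup_left : L ≤ L ⊔ M) hsL)
  -- not in M
  have notM : (gp - tp) / s ∉ M := by
    intro hbM
    letI : Algebra (ZMod p) Ω := ZMod.algebra Ω p
    haveI : CharP (↥(⊥ : Subfield Ω)) p := by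
      constructor
      intro n
      rw [← CharP.cast_eq_zero_iff Ω p n, Subtype.ext_iff]
      push_cast
      rfl
    have hind2 : AlgebraicIndependent (↥(⊥ : Subfield Ω)) ![a, t] := by
      have h := hind.comp ![0, 2] (by decide)
      have he : (![a, s, t] ∘ ![0, 2] : Fin 2 → Ω) = ![a, t] := by
        funext i; fin_cases i <;> rfl
      rwa [he] at h
    have hind3 : AlgebraicIndependent (ZMod p) ![a, t] := by
      rw [algebraicIndependent_iff]
      intro P hP0
      set φ : ZMod p →+* ↥(⊥ : Subfield Ω) := ZMod.castHom dvd_rfl _ with hφdef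
      apply MvPolynomial.map_injective φ φ.injective
      rw [map_zero]
      apply algebraicIndependent_iff.mp hind2
      rw [← hP0, MvPolynomial.aeval_def, MvPolynomial.aeval_def, MvPolynomial.eval₂_map]
      congr 1
      exact Subsingleton.elim _ _
    have haC : a ∈ Subfield.closure {a ^ p, t} := by
      have h := aux_pow_mem p hp a t tp ((gp - tp) / s) htp (hM ▸ hbM)
      rwa [key] at h
    exact aux_notMem_closure p hp a t ha0 hind3 haC
  refine ⟨key, memLM, notM, ?_⟩
  intro h
  have haM : a ∈ M := hM ▸ Subfield.subset_closure (by simp)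
  apply notM
  refine h _ memLM ⟨Polynomial.X ^ p - Polynomial.C ⟨a, haM⟩,
    Polynomial.X_pow_sub_C_ne_zero hp.pos _, ?_⟩
  simp only [map_sub, map_pow, Polynomial.aeval_X, Polynomial.aeval_C]
  rw [key]
  exact sub_self _
end

section
/- Let G be a profinite group and H a closed subgroup. The intersection of all open normal subgroups of G of index p containing H equals H·Φ^p(G), where Φ^p(G) is the intersection of all open normal subgroups of G of index p. -/
/-!
If `x ∉ H · Φ^p(G)`, compactness of `H` yields finitely many open normal subgroups of index `p`
whose intersection `W` still satisfies `x ∉ H W`. The quotient `G ⧸ W` is an elementary abelian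
`p`-group, i.e. an `𝔽_p`-vector space, so a linear functional kills the image of `H` but not that
of `x`; its kernel, pulled back to `G`, is an open normal subgroup of index `p` containing `H` but
not `x`.
-/

open Subgroup

theorem Subgroup.commutator_le_of_index_prime {G : Type*} [Group G] {N : Subgroup G} [N.Normal]
    (hN : N.index.Prime) : _root_.commutator G ≤ N := by
  have : Fact (Nat.card (G ⧸ N)).Prime := ⟨hN⟩
  have := isCyclic_of_prime_card (α := G ⧸ N) rfl
  let _ := IsCyclic.commGroup (α := G ⧸ N)
  exact Normal.quotient_commutative_iff_commutator_le.mp inferInstance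

theorem MonoidHom.index_ker_eq_of_apply_ne_one {G Q : Type*} [Group G] [Group Q] {p : ℕ}
    [Fact p.Prime] (hQ : Nat.card Q = p) (φ : G →* Q) {x : G} (hx : φ x ≠ 1) :
    φ.ker.index = p := by
  subst hQ
  have hrange : φ.range = ⊤ := φ.range.eq_bot_or_eq_top_of_prime_card.resolve_left fun h =>
    hx (by rw [← mem_bot, ← h]; exact ⟨x, rfl⟩)
  rw [index_ker, hrange, card_top]

theorem AddSubgroup.exists_addMonoidHom_zmod_of_notMem {V : Type*} [AddCommGroup V] {p : ℕ}
    [Fact p.Prime] [Module (ZMod p) V] {K : AddSubgroup V} {x : V} (hx : x ∉ K) :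
    ∃ f : V →+ ZMod p, K ≤ f.ker ∧ f x ≠ 0 := by
  obtain ⟨f, hfx, hfK⟩ :=
    Submodule.exists_dual_map_eq_bot_of_notMem (p := toZModSubmodule p K) hx inferInstance
  refine ⟨f.toAddMonoidHom, fun k hk => ?_, hfx⟩
  have : f k ∈ (toZModSubmodule p K).map f := Submodule.mem_map_of_mem hk
  simpa [hfK] using this

theorem Subgroup.exists_monoidHom_zmod_of_notMem {V : Type*} [CommGroup V] {p : ℕ} [Fact p.Prime]
    (hexp : ∀ v : V, v ^ p = 1) {K : Subgroup V} {x : V} (hx : x ∉ K) :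
    ∃ φ : V →* Multiplicative (ZMod p), K ≤ φ.ker ∧ φ x ≠ 1 := by
  let _ : Module (ZMod p) (Additive V) :=
    AddCommMonoid.zmodModule fun v => congrArg Additive.ofMul (hexp v.toMul)
  obtain ⟨f, hfK, hfx⟩ := AddSubgroup.exists_addMonoidHom_zmod_of_notMem (p := p)
    (K := K.toAddSubgroup) (x := Additive.ofMul x) hx
  exact ⟨AddMonoidHom.toMultiplicativeRight f, fun k hk => hfK hk, hfx⟩

theorem Subgroup.exists_monoidHom_zmod_of_notMem_sup {G : Type*} [Group G] {p : ℕ} [Fact p.Prime]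
    {W : Subgroup G} [W.Normal] (hcomm : _root_.commutator G ≤ W) (hpow : ∀ g : G, g ^ p ∈ W)
    {H : Subgroup G} {x : G} (hx : x ∉ H ⊔ W) :
    ∃ φ : G →* Multiplicative (ZMod p), W ≤ φ.ker ∧ H ≤ φ.ker ∧ φ x ≠ 1 := by
  have : IsMulCommutative (G ⧸ W) := Normal.quotient_commutative_iff_commutator_le.mpr hcomm
  open scoped IsMulCommutative in
  obtain ⟨ψ, hψH, hψx⟩ := exists_monoidHom_zmod_of_notMem (V := G ⧸ W) (p := p)
    (fun v => QuotientGroup.induction_on v fun g => (QuotientGroup.eq_one_iff _).mpr (hpow g))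
    (K := H.map (QuotientGroup.mk' W)) (x := QuotientGroup.mk' W x)
    (by rwa [← mem_comap, comap_map_eq, QuotientGroup.ker_mk'])
  refine ⟨ψ.comp (QuotientGroup.mk' W), fun w hw => ?_, fun h hh => ?_, hψx⟩
  · simp [(QuotientGroup.eq_one_iff w).mpr hw]
  · exact hψH (mem_map_of_mem _ hh)

theorem IsCompact.exists_finset_notMem_sup_iInf {G : Type*} [Group G] [TopologicalSpace G]
    [IsTopologicalGroup G] {H : Subgroup G} (hH : IsCompact (H : Set G)) {𝒩 : Set (Subgroup G)}
    (h𝒩 : ∀ N ∈ 𝒩, N.Normal ∧ IsClosed (N : Set G)) {x : G} (hx : x ∉ H ⊔ ⨅ N ∈ 𝒩, N) :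
    ∃ u : Finset 𝒩, x ∉ H ⊔ ⨅ N ∈ u, (N : Subgroup G) := by
  let C := (fun h => h⁻¹ * x) '' (H : Set G)
  have hC : IsCompact C := hH.image (by fun_prop)
  have hdisj : C ∩ ⋂ N : 𝒩, (N : Set G) = ∅ := by
    refine Set.eq_empty_iff_forall_notMem.mpr ?_
    rintro _ ⟨⟨h, hh, rfl⟩, hy⟩
    have hyΦ : h⁻¹ * x ∈ ⨅ N ∈ 𝒩, N :=
      mem_iInf.mpr fun N => mem_iInf.mpr fun hN => Set.mem_iInter.mp hy ⟨N, hN⟩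
    exact hx (by simpa using mul_mem_sup hh hyΦ)
  obtain ⟨u, hu⟩ := hC.elim_finite_subfamily_closed (fun N : 𝒩 => (N : Set G))
    (fun N => (h𝒩 N N.2).2) hdisj
  refine ⟨u, fun hxu => ?_⟩
  have : (⨅ N ∈ u, (N : Subgroup G)).Normal :=
    normal_iInf_normal fun N => normal_iInf_normal fun _ => (h𝒩 N N.2).1
  rw [← SetLike.mem_coe, mul_normal] at hxu
  obtain ⟨h, hh, w, hw, rfl⟩ := hxu
  have hwC : w ∈ C ∩ ⋂ N ∈ u, (N : Set G) :=
    ⟨⟨h, hh, by group⟩, Set.mem_iInter₂.mpr fun N hN =>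
      mem_iInf.mp (mem_iInf.mp (SetLike.mem_coe.mp hw) N) hN⟩
  exact (hu ▸ hwC : w ∈ (∅ : Set G))

theorem stmt_4_general (p : ℕ) (hp : p.Prime) (G : Type*) [Group G] [TopologicalSpace G]
    [IsTopologicalGroup G] [CompactSpace G]
    (H : Subgroup G) (hH : IsClosed (H : Set G)) :
    (⨅ N ∈ {N : Subgroup G | N.Normal ∧ IsOpen (N : Set G) ∧ N.index = p ∧ H ≤ N}, N)
      = H ⊔ ⨅ N ∈ {N : Subgroup G | N.Normal ∧ IsOpen (N : Set G) ∧ N.index = p}, N := by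
  have := Fact.mk hp
  refine le_antisymm ?_ <|
    le_iInf₂ fun N hN => sup_le hN.2.2.2 (iInf₂_le N ⟨hN.1, hN.2.1, hN.2.2.1⟩)
  intro x hx
  by_contra hxΦ
  obtain ⟨u, hxu⟩ := hH.isCompact.exists_finset_notMem_sup_iInf
    (fun N hN => ⟨hN.1, N.isClosed_of_isOpen hN.2.1⟩) hxΦ
  set W := ⨅ N ∈ u, (N : Subgroup G)
  have : W.Normal := normal_iInf_normal fun N => normal_iInf_normal fun _ => N.2.1
  have hWopen : IsOpen (W : Set G) := by
    simpa only [W, coe_iInf] using isOpen_biInter_finset fun N _ => N.2.2.1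
  have hcomm : _root_.commutator G ≤ W := le_iInf₂ fun N _ =>
    have := N.2.1
    commutator_le_of_index_prime (by rwa [N.2.2.2])
  have hpow (g : G) : g ^ p ∈ W := mem_iInf.mpr fun N => mem_iInf.mpr fun _ => by
    have := N.2.1
    simpa [N.2.2.2] using (N : Subgroup G).pow_index_mem g
  obtain ⟨φ, hWφ, hHφ, hφx⟩ := exists_monoidHom_zmod_of_notMem_sup hcomm hpow hxu
  have hφp : φ.ker.index = p := φ.index_ker_eq_of_apply_ne_one (by simp) hφx
  exact hφx <|
    mem_iInf.mp (mem_iInf.mp hx φ.ker) ⟨inferInstance, isOpen_mono hWφ hWopen, hφp, hHφ⟩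

/-- In a profinite group `G` with a closed subgroup `H`, the intersection of all open normal
subgroups of index `p` containing `H` equals `H · Φ^p(G)`, where `Φ^p(G)` is the intersection
of all open normal subgroups of index `p`. -/
theorem stmt_4 (p : ℕ) (hp : p.Prime) (G : Type*) [Group G] [TopologicalSpace G]
    [IsTopologicalGroup G] [CompactSpace G] [TotallyDisconnectedSpace G]
    (H : Subgroup G) (hH : IsClosed (H : Set G)) :
    (⨅ N ∈ {N : Subgroup G | N.Normal ∧ IsOpen (N : Set G) ∧ N.index = p ∧ H ≤ N}, N)
      = H ⊔ ⨅ N ∈ {N : Subgroup G | N.Normal ∧ IsOpen (N : Set G) ∧ N.index = p}, N :=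
  stmt_4_general p hp G H hH
end

section
/- Let L/F and M/F be Galois extensions inside a common field with L ∩ M = F. Then the p-socle of LM/F is the compositum of the p-socles of L/F and M/F. -/
/-!
Every degree-`p` Galois subextension `E` of `LM` has a primitive element, so it already lies in
`L₀M₀` for finite Galois `L₀ ⊆ L`, `M₀ ⊆ M`, and we may assume `L`, `M` finite. Then
`G = Gal(LM/F)` is the internal direct product of `A = Gal(LM/M)` and `B = Gal(LM/L)`, and `E`
is the fixed field of a normal subgroup `N` of index `p`. If `g = xb = ya` with `x ∈ A ∩ N`,
`b ∈ B`, `y ∈ B ∩ N`, `a ∈ A`, then `a` and `y` commute, so `x⁻¹a = by⁻¹ ∈ A ∩ B = 1` and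
`g = xy ∈ N`. Hence `(A ∩ N)B ∩ (B ∩ N)A ≤ N`, and `E` lies in the compositum of the fixed
fields of `(A ∩ N)B ≥ B` and `(B ∩ N)A ≥ A`. These are Galois subextensions of `L` and of `M`
of degrees `[A : A ∩ N]` and `[B : B ∩ N]`, which divide `[G : N] = p`.
-/

open IntermediateField

/-- The `p`-socle of an intermediate field `K` of `Ω/F`: the compositum of all degree-`p`
Galois (equivalently, cyclic of degree `p`) subextensions of `K/F`. -/
noncomputable def pSocle (p : ℕ) {F Ω : Type*} [Field F] [Field Ω] [Algebra F Ω]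
    (K : IntermediateField F Ω) : IntermediateField F Ω :=
  ⨆ E ∈ {E : IntermediateField F Ω | E ≤ K ∧ IsGalois F E ∧ Module.finrank F E = p}, E

namespace Subgroup

variable {G : Type*} [Group G]

theorem inf_sup_inf_sup_le {A B : Subgroup G} [A.Normal] [B.Normal] (hAB : Disjoint A B)
    (N : Subgroup G) : (A ⊓ N ⊔ B) ⊓ (B ⊓ N ⊔ A) ≤ N := by
  rintro _ ⟨hg₁, hg₂⟩
  obtain ⟨x, hx, b, hb, rfl⟩ := mem_sup_of_normal_right.mp hg₁
  obtain ⟨y, hy, a, ha, hya⟩ := mem_sup_of_normal_right.mp hg₂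
  have hxb : x * b = a * y :=
    hya ▸ (commute_of_normal_of_disjoint A B ‹_› ‹_› hAB a y ha hy.1).eq.symm
  have hby : b * y⁻¹ = x⁻¹ * a := by
    rw [mul_inv_eq_iff_eq_mul, mul_assoc, ← hxb, inv_mul_cancel_left]
  have hby' : b * y⁻¹ = 1 :=
    disjoint_def.mp hAB (hby ▸ A.mul_mem (A.inv_mem hx.1) ha) (B.mul_mem hb (B.inv_mem hy.1))
  rw [mul_inv_eq_one.mp hby']
  exact N.mul_mem hx.2 hy.2

theorem index_dvd_index_of_sup_eq_top {A H N : Subgroup G} [H.Normal] [N.Normal]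
    (hAH : A ⊔ H = ⊤) (hAN : A ⊓ N ≤ H) : H.index ∣ N.index :=
  calc H.index = H.relIndex A := by rw [← relIndex_top_right, ← hAH, relIndex_sup_right]
    _ ∣ (A ⊓ N).relIndex A := relIndex_dvd_of_le_left A hAN
    _ = N.relIndex A := inf_relIndex_left A N
    _ ∣ N.index := relIndex_dvd_index_of_normal N A

end Subgroup

namespace IsGalois

variable {F K : Type*} [Field F] [Field K] [Algebra F K] [FiniteDimensional F K] [IsGalois F K]

theorem fixingSubgroup_inf (L M : IntermediateField F K) :
    (L ⊓ M).fixingSubgroup = L.fixingSubgroup ⊔ M.fixingSubgroup :=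
  intermediateFieldEquivSubgroup.map_inf L M

theorem fixedField_inf (H H' : Subgroup (K ≃ₐ[F] K)) :
    fixedField (H ⊓ H') = fixedField H ⊔ fixedField H' :=
  intermediateFieldEquivSubgroup.symm.map_sup (OrderDual.toDual H) (OrderDual.toDual H')

end IsGalois

namespace IntermediateField

variable {F Ω : Type*} [Field F] [Field Ω] [Algebra F Ω]

instance isGalois_lift {K : IntermediateField F Ω} (K₀ : IntermediateField F K)
    [IsGalois F K₀] : IsGalois F (lift K₀) :=
  IsGalois.of_algEquiv (liftAlgEquiv K₀)

instance finiteDimensional_lift {K : IntermediateField F Ω} (K₀ : IntermediateField F K)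
    [FiniteDimensional F K₀] : FiniteDimensional F (lift K₀) :=
  (liftAlgEquiv K₀).toLinearEquiv.finiteDimensional

instance isGalois_restrict {K K₀ : IntermediateField F Ω} (h : K₀ ≤ K) [IsGalois F K₀] :
    IsGalois F (restrict h) :=
  IsGalois.of_algEquiv (restrictAlgEquiv h)

theorem iSup_lift_finiteGaloisIntermediateField (K : IntermediateField F Ω) [IsGalois F K] :
    ⨆ K₀ : FiniteGaloisIntermediateField F K, lift K₀.toIntermediateField = K := by
  refine le_antisymm (iSup_le fun K₀ ↦ lift_le _) fun x hx ↦ ?_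
  let K₀ := FiniteGaloisIntermediateField.adjoin F {(⟨x, hx⟩ : K)}
  have hxK₀ : x ∈ lift K₀.toIntermediateField :=
    (mem_lift _).mpr (FiniteGaloisIntermediateField.subset_adjoin F _ (Set.mem_singleton _))
  exact le_iSup (fun K₀ : FiniteGaloisIntermediateField F K ↦ lift K₀.toIntermediateField) K₀ hxK₀

theorem exists_finiteGalois_le_sup_of_le_sup {L M E : IntermediateField F Ω} [IsGalois F L]
    [IsGalois F M] [FiniteDimensional F E] [Algebra.IsSeparable F E] (hE : E ≤ L ⊔ M) :
    ∃ (L₀ : FiniteGaloisIntermediateField F L) (M₀ : FiniteGaloisIntermediateField F M),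
      E ≤ lift L₀.toIntermediateField ⊔ lift M₀.toIntermediateField := by
  obtain ⟨α, hα⟩ := Field.exists_primitive_element F E
  have hEα : E = F⟮(α : Ω)⟯ := by rw [← lift_adjoin_simple, hα, lift_top]
  let f (K : FiniteGaloisIntermediateField F L × FiniteGaloisIntermediateField F M) :
      IntermediateField F Ω := lift K.1.toIntermediateField ⊔ lift K.2.toIntermediateField
  have hdir : Directed (· ≤ ·) f :=
    Monotone.directed_le fun K K' h ↦
      sup_le_sup (map_mono _ (Prod.le_def.mp h).1) (map_mono _ (Prod.le_def.mp h).2)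
  have hLM : L ⊔ M ≤ ⨆ K, f K := sup_le
    ((iSup_lift_finiteGaloisIntermediateField L).ge.trans
      (iSup_le fun L₀ ↦ le_iSup_of_le (L₀, ⊥) le_sup_left))
    ((iSup_lift_finiteGaloisIntermediateField M).ge.trans
      (iSup_le fun M₀ ↦ le_iSup_of_le (⊥, M₀) le_sup_right))
  have hα' := hLM (hE α.2)
  have : Nonempty (FiniteGaloisIntermediateField F L × FiniteGaloisIntermediateField F M) :=
    ⟨(⊥, ⊥)⟩
  rw [← SetLike.mem_coe, coe_iSup_of_directed hdir, Set.mem_iUnion] at hα'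
  obtain ⟨⟨L₀, M₀⟩, hα'⟩ := hα'
  exact ⟨L₀, M₀, hEα ▸ adjoin_simple_le_iff.mpr hα'⟩

end IntermediateField

section pSocle

variable {F Ω : Type*} [Field F] [Field Ω] [Algebra F Ω] {p : ℕ}

theorem pSocle_le_iff {K X : IntermediateField F Ω} :
    pSocle p K ≤ X ↔ ∀ E ≤ K, IsGalois F E → Module.finrank F E = p → E ≤ X := by
  simp only [pSocle, iSup₂_le_iff, Set.mem_ofPred_eq, and_imp]

theorem le_pSocle {K E : IntermediateField F Ω} (hEK : E ≤ K) [IsGalois F E]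
    (hE : Module.finrank F E = p) : E ≤ pSocle p K :=
  pSocle_le_iff.mp le_rfl E hEK ‹_› hE

theorem le_pSocle_of_finrank_dvd (hp : p.Prime) {K E : IntermediateField F Ω} (hEK : E ≤ K)
    [IsGalois F E] (hE : Module.finrank F E ∣ p) : E ≤ pSocle p K := by
  rcases hp.eq_one_or_self_of_dvd _ hE with hE | hE
  · rw [finrank_eq_one_iff.mp hE]
    exact bot_le
  · exact le_pSocle hEK hE

theorem pSocle_mono {K K' : IntermediateField F Ω} (h : K ≤ K') : pSocle p K ≤ pSocle p K' :=
  pSocle_le_iff.mpr fun _ hE _ hEp ↦ le_pSocle (hE.trans h) hEp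

theorem map_pSocle_le {Ω' : Type*} [Field Ω'] [Algebra F Ω'] (φ : Ω →ₐ[F] Ω')
    (K : IntermediateField F Ω) : (pSocle p K).map φ ≤ pSocle p (K.map φ) := by
  simp only [pSocle, IntermediateField.map_iSup]
  refine iSup₂_le fun E hE ↦ ?_
  have := hE.2.1
  have : IsGalois F (E.map φ) := IsGalois.of_algEquiv (equivMap E φ)
  exact le_pSocle (map_mono φ hE.1) ((equivMap E φ).toLinearEquiv.finrank_eq.symm.trans hE.2.2)

end pSocle

section FiniteGalois

variable {F K : Type*} [Field F] [Field K] [Algebra F K] [FiniteDimensional F K] [IsGalois F K]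
  {p : ℕ}

/-- This fixed field is `L ∩ ME`. -/
theorem fixedField_inf_sup_le_pSocle (hp : p.Prime) {L M E : IntermediateField F K}
    [IsGalois F L] [IsGalois F M] [IsGalois F E] (hLM : L ⊓ M = ⊥)
    (hE : Module.finrank F E = p) :
    fixedField (M.fixingSubgroup ⊓ E.fixingSubgroup ⊔ L.fixingSubgroup) ≤ pSocle p L := by
  refine le_pSocle_of_finrank_dvd hp
    ((fixedField_le le_sup_right).trans (IsGalois.fixedField_fixingSubgroup L).le) ?_
  rw [finrank_eq_fixingSubgroup_index, fixingSubgroup_fixedField, ← hE,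
    finrank_eq_fixingSubgroup_index]
  refine Subgroup.index_dvd_index_of_sup_eq_top (eq_top_iff.mpr ?_) le_sup_left
  calc ⊤ = (M ⊓ L).fixingSubgroup := by rw [inf_comm, hLM, fixingSubgroup_bot]
    _ = M.fixingSubgroup ⊔ L.fixingSubgroup := IsGalois.fixingSubgroup_inf M L
    _ ≤ _ := sup_le_sup_left le_sup_right _

theorem le_pSocle_sup_pSocle_of_sup_eq_top (hp : p.Prime) {L M E : IntermediateField F K}
    [IsGalois F L] [IsGalois F M] [IsGalois F E] (hsup : L ⊔ M = ⊤) (hinf : L ⊓ M = ⊥)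
    (hE : Module.finrank F E = p) : E ≤ pSocle p L ⊔ pSocle p M := by
  have hdisj : Disjoint M.fixingSubgroup L.fixingSubgroup := by
    rw [disjoint_iff, ← fixingSubgroup_sup, sup_comm, hsup, fixingSubgroup_top]
  calc E = fixedField E.fixingSubgroup := (IsGalois.fixedField_fixingSubgroup E).symm
    _ ≤ fixedField ((M.fixingSubgroup ⊓ E.fixingSubgroup ⊔ L.fixingSubgroup) ⊓
          (L.fixingSubgroup ⊓ E.fixingSubgroup ⊔ M.fixingSubgroup)) :=
      fixedField_le (Subgroup.inf_sup_inf_sup_le hdisj _)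
    _ = _ := IsGalois.fixedField_inf _ _
    _ ≤ pSocle p L ⊔ pSocle p M := sup_le_sup (fixedField_inf_sup_le_pSocle hp hinf hE)
          (fixedField_inf_sup_le_pSocle hp (inf_comm L M ▸ hinf) hE)

end FiniteGalois

section Compositum

variable {F Ω : Type*} [Field F] [Field Ω] [Algebra F Ω] {p : ℕ}

theorem le_pSocle_sup_pSocle (hp : p.Prime) {L M E : IntermediateField F Ω}
    [FiniteDimensional F L] [FiniteDimensional F M] [IsGalois F L] [IsGalois F M] [IsGalois F E]
    (hinf : L ⊓ M = ⊥) (hELM : E ≤ L ⊔ M) (hE : Module.finrank F E = p) :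
    E ≤ pSocle p L ⊔ pSocle p M := by
  have hL : L ≤ L ⊔ M := le_sup_left
  have hM : M ≤ L ⊔ M := le_sup_right
  have key := le_pSocle_sup_pSocle_of_sup_eq_top hp (L := restrict hL) (M := restrict hM)
    (E := restrict hELM)
    (lift_injective _ (by rw [lift_sup, lift_restrict, lift_restrict, lift_top] : _ = lift ⊤))
    (lift_injective _ (by rw [lift_inf, lift_restrict, lift_restrict, hinf, lift_bot] :
      _ = lift ⊥))
    ((restrictAlgEquiv hELM).toLinearEquiv.finrank_eq.symm.trans hE)
  calc E = lift (restrict hELM) := (lift_restrict hELM).symm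
    _ ≤ lift (pSocle p (restrict hL) ⊔ pSocle p (restrict hM)) := map_mono _ key
    _ ≤ pSocle p L ⊔ pSocle p M := by
      rw [lift_sup]
      exact sup_le_sup ((map_pSocle_le _ _).trans_eq (congrArg _ (lift_restrict hL)))
        ((map_pSocle_le _ _).trans_eq (congrArg _ (lift_restrict hM)))

end Compositum

/-- If `L/F` and `M/F` are Galois extensions inside a common field with `L ∩ M = F`, then
the `p`-socle of `LM/F` is the compositum of the `p`-socles of `L/F` and `M/F`. -/
theorem stmt_6 (p : ℕ) (hp : p.Prime) {F Ω : Type*} [Field F] [Field Ω] [Algebra F Ω]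
    (L M : IntermediateField F Ω) (hL : IsGalois F L) (hM : IsGalois F M)
    (hinter : L ⊓ M = ⊥) :
    pSocle p (L ⊔ M) = pSocle p L ⊔ pSocle p M := by
  refine le_antisymm (pSocle_le_iff.mpr fun E hE _ hEp ↦ ?_)
    (sup_le (pSocle_mono le_sup_left) (pSocle_mono le_sup_right))
  have : FiniteDimensional F E := .of_finrank_pos (hEp ▸ hp.pos)
  obtain ⟨L₀, M₀, hE₀⟩ := exists_finiteGalois_le_sup_of_le_sup hE
  have hinf₀ : lift L₀.toIntermediateField ⊓ lift M₀.toIntermediateField = ⊥ :=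
    le_bot_iff.mp (hinter ▸ inf_le_inf (lift_le _) (lift_le _))
  exact (le_pSocle_sup_pSocle hp hinf₀ hE₀ hEp).trans
    (sup_le_sup (pSocle_mono (lift_le _)) (pSocle_mono (lift_le _)))
end

section
/- Let N/F be a Galois p-extension and K/F an arbitrary extension inside a common field. If Soc^p(N/F) ∩ K = F then N ∩ K = F. -/
/-!
If `N ∩ K ≠ F`, pick `x ∈ (N ∩ K) \ F` and a finite Galois extension `M/F` inside `N`
containing `x`. Its Galois group is a `p`-group, so the proper subgroup fixing `F(x)` lies in
a normal subgroup of index `p`, whose fixed field is a Galois subextension of `N/F` of degree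
`p` contained in `F(x) ⊆ K`, hence in `Soc^p(N/F) ∩ K`.
-/

theorem IsPGroup.exists_le_normal_index_eq {G : Type*} [Group G] [Finite G] {p : ℕ} [Fact p.Prime]
    (hG : IsPGroup p G) {H : Subgroup G} (hH : H ≠ ⊤) :
    ∃ K : Subgroup G, H ≤ K ∧ K.Normal ∧ K.index = p := by
  have hp : p.Prime := Fact.out
  obtain ⟨k, hk⟩ := IsPGroup.iff_card.mp hG
  obtain ⟨m, hm⟩ := IsPGroup.iff_card.mp (hG.to_subgroup H)
  have hmk : m < k := by
    have hdvd : p ^ m ∣ p ^ k := hm ▸ hk ▸ Subgroup.card_subgroup_dvd_card H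
    have hne : m ≠ k := fun h => hH <| (Subgroup.card_eq_iff_eq_top H).mp (by rw [hm, hk, h])
    exact lt_of_le_of_ne ((Nat.pow_dvd_pow_iff_le_right hp.one_lt).mp hdvd) hne
  obtain ⟨j, rfl⟩ : ∃ j, k = j + 1 := ⟨k - 1, by omega⟩
  obtain ⟨K, hK, hHK⟩ := Sylow.exists_subgroup_card_pow_prime_le p
    (hk ▸ pow_dvd_pow p j.le_succ) H hm (Nat.le_of_lt_succ hmk)
  have hKidx : K.index = p := by
    have := K.card_mul_index
    rw [hK, hk, pow_succ] at this
    exact Nat.eq_of_mul_eq_mul_left (pow_pos hp.pos _) this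
  refine ⟨K, hHK, Subgroup.normal_of_index_eq_minFac_card ?_, hKidx⟩
  rw [hKidx, hk, hp.pow_minFac j.succ_ne_zero]

open IntermediateField Module

theorem IsGalois.exists_isGalois_le_finrank_eq_prime {F M : Type*} [Field F] [Field M]
    [Algebra F M] [FiniteDimensional F M] [IsGalois F M] {p n : ℕ} [Fact p.Prime]
    (hM : finrank F M = p ^ n) {E : IntermediateField F M} (hE : E ≠ ⊥) :
    ∃ D ≤ E, IsGalois F D ∧ finrank F D = p := by
  have hG : IsPGroup p Gal(M/F) :=
    IsPGroup.iff_card.mpr ⟨n, (IsGalois.card_aut_eq_finrank F M).trans hM⟩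
  have hfix : E.fixingSubgroup ≠ ⊤ := fun h => hE <| by
    rw [← IsGalois.fixedField_fixingSubgroup E, h, IsGalois.fixedField_top]
  obtain ⟨K, hEK, hK, hKidx⟩ := hG.exists_le_normal_index_eq hfix
  refine ⟨fixedField K, ?_, inferInstance, ?_⟩
  · exact IsGalois.fixedField_fixingSubgroup E ▸ fixedField_le hEK
  · rw [finrank_eq_fixingSubgroup_index, fixingSubgroup_fixedField, hKidx]

namespace IntermediateField

variable {F Ω : Type*} [Field F] [Field Ω] [Algebra F Ω]

theorem exists_isGalois_le_finrank_eq_prime {M E : IntermediateField F Ω} [FiniteDimensional F M]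
    [IsGalois F M] {p n : ℕ} [Fact p.Prime] (hM : finrank F M = p ^ n) (hEM : E ≤ M)
    (hE : E ≠ ⊥) : ∃ D ≤ E, IsGalois F D ∧ finrank F D = p := by
  have hE' : restrict hEM ≠ ⊥ := fun h => hE <| by rw [← lift_restrict hEM, h, lift_bot]
  obtain ⟨D, hDE, _, hD⟩ := IsGalois.exists_isGalois_le_finrank_eq_prime hM hE'
  exact ⟨lift D, lift_restrict hEM ▸ map_mono _ hDE, IsGalois.of_algEquiv (liftAlgEquiv D),
    (liftAlgEquiv D).toLinearEquiv.finrank_eq ▸ hD⟩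

theorem exists_finiteDimensional_isGalois_between {N E : IntermediateField F Ω}
    [IsGalois F N] [FiniteDimensional F E] (hEN : E ≤ N) :
    ∃ M : IntermediateField F Ω, E ≤ M ∧ M ≤ N ∧ FiniteDimensional F M ∧ IsGalois F M := by
  have : FiniteDimensional F (restrict hEN) :=
    (restrictAlgEquiv hEN).toLinearEquiv.finiteDimensional
  let C := normalClosure F (restrict hEN) N
  exact ⟨lift C, lift_restrict hEN ▸ map_mono _ (le_normalClosure _), lift_le C,
    (liftAlgEquiv C).toLinearEquiv.finiteDimensional, IsGalois.of_algEquiv (liftAlgEquiv C)⟩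

theorem exists_isGalois_le_finrank_eq_prime_of_le {N E : IntermediateField F Ω} [IsGalois F N]
    {p : ℕ} [Fact p.Prime]
    (hN : ∀ D : IntermediateField F Ω, D ≤ N → FiniteDimensional F D → IsGalois F D →
      ∃ n : ℕ, finrank F D = p ^ n)
    (hEN : E ≤ N) (hE : E ≠ ⊥) : ∃ D ≤ E, IsGalois F D ∧ finrank F D = p := by
  obtain ⟨x, hxE, hx⟩ := SetLike.not_le_iff_exists.mp (hE ∘ eq_bot_iff.mpr)
  have hx_int : IsIntegral F x :=
    isIntegral_iff.mp (Algebra.IsIntegral.isIntegral (⟨x, hEN hxE⟩ : N))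
  have : FiniteDimensional F F⟮x⟯ := adjoin.finiteDimensional hx_int
  obtain ⟨M, hxM, hMN, _, _⟩ :=
    exists_finiteDimensional_isGalois_between (adjoin_simple_le_iff.mpr (hEN hxE))
  obtain ⟨n, hn⟩ := hN M hMN ‹_› ‹_›
  obtain ⟨D, hD, hDgal, hDp⟩ :=
    exists_isGalois_le_finrank_eq_prime hn hxM (adjoin_simple_eq_bot_iff.not.mpr hx)
  exact ⟨D, hD.trans (adjoin_simple_le_iff.mpr hxE), hDgal, hDp⟩

end IntermediateField

/-- Let `N/F` be a Galois `p`-extension and `K/F` an arbitrary extension inside a common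
field.  If `Soc^p(N/F) ∩ K = F`, then `N ∩ K = F`. -/
theorem stmt_9 (p : ℕ) (hp : p.Prime) {F Ω : Type*} [Field F] [Field Ω] [Algebra F Ω]
    (N K : IntermediateField F Ω) (hGal : IsGalois F N)
    (hpro : ∀ D : IntermediateField F Ω, D ≤ N → FiniteDimensional F D → IsGalois F D →
      ∃ n : ℕ, Module.finrank F D = p ^ n)
    (hsoc : (⨆ D ∈ {D : IntermediateField F Ω |
        D ≤ N ∧ IsGalois F D ∧ Module.finrank F D = p}, D) ⊓ K = ⊥) :
    N ⊓ K = ⊥ := by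
  have : Fact p.Prime := ⟨hp⟩
  by_contra hNK
  obtain ⟨D, hD, hDgal, hDp⟩ := exists_isGalois_le_finrank_eq_prime_of_le hpro inf_le_left hNK
  have hDbot : D = ⊥ := le_bot_iff.mp <| hsoc ▸
    le_inf (le_biSup (fun D => D) ⟨hD.trans inf_le_left, hDgal, hDp⟩) (hD.trans inf_le_right)
  rw [hDbot, IntermediateField.finrank_bot] at hDp
  exact hp.one_lt.ne hDp
end

section
/- Let F be a field of characteristic p and a₁, …, aₙ ∈ F. The extension F(℘⁻¹a₁, …, ℘⁻¹aₙ)/F has Galois group (C_p)^n if and only if the classes of a₁, …, aₙ in the additive group F/℘(F) are linearly independent over 𝔽_p, where ℘(x) = x^p − x. -/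
/-!
Every `σ ∈ Gal(E/F)` sends a root `rᵢ` of `X ^ p - X - aᵢ` to another root, so
`σ rᵢ = rᵢ + kᵢ(σ)` with `kᵢ(σ) ∈ 𝔽_p`, and `σ ↦ (kᵢ(σ))ᵢ` is an injective homomorphism
`Gal(E/F) → 𝔽_pⁿ`; `E/F` is Galois because these roots are simple and all lie in `E`.
The homomorphism is onto iff no nonzero `ν ∈ 𝔽_pⁿ` is orthogonal to its image. Now `ν` is
orthogonal to the image iff `s = ∑ νᵢ rᵢ` is Galois invariant, i.e. `s ∈ F`; since
`℘ s = ∑ νᵢ aᵢ`, this happens iff `∑ νᵢ aᵢ ∈ ℘(F)`.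
-/

open Polynomial IntermediateField

section ArtinSchreierMap

variable (L : Type*) [CommRing L] (p : ℕ) [ExpChar L p]

def artinSchreier : L →+ L := (frobenius L p).toAddMonoidHom - AddMonoidHom.id L

variable {L p}

@[simp]
lemma artinSchreier_apply (x : L) : artinSchreier L p x = x ^ p - x := rfl

lemma map_artinSchreier {M G : Type*} [CommRing M] [ExpChar M p] [FunLike G L M]
    [RingHomClass G L M] (f : G) (x : L) :
    f (artinSchreier L p x) = artinSchreier M p (f x) := by
  simp

end ArtinSchreierMap

theorem map_zmod_castHom {n : ℕ} {R S G : Type*} [Ring R] [Ring S] [CharP R n] [CharP S n]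
    [FunLike G R S] [RingHomClass G R S] (f : G) (k : ZMod n) :
    f (ZMod.castHom dvd_rfl R k) = ZMod.castHom dvd_rfl S k :=
  RingHom.congr_fun (RingHom.ext_zmod ((f : R →+* S).comp _) _) k

section Kernel

variable {p : ℕ} [Fact p.Prime] {L : Type*} [Field L] [CharP L p]

theorem artinSchreier_eq_zero_iff {x : L} :
    artinSchreier L p x = 0 ↔ ∃ k : ZMod p, ZMod.castHom dvd_rfl L k = x := by
  rw [artinSchreier_apply, sub_eq_zero, ← Subfield.mem_bot_iff_pow_eq_self,
    ← ZMod.fieldRange_castHom_eq_bot p, RingHom.mem_fieldRange]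

theorem exists_eq_add_of_artinSchreier_eq {x y : L}
    (h : artinSchreier L p y = artinSchreier L p x) :
    ∃ k : ZMod p, y = x + ZMod.castHom dvd_rfl L k := by
  obtain ⟨k, hk⟩ := artinSchreier_eq_zero_iff.1 <| show artinSchreier L p (y - x) = 0 by
    rw [map_sub, h, sub_self]
  exact ⟨k, by rw [hk, add_sub_cancel]⟩

end Kernel

theorem separable_X_pow_sub_X_sub_C {R : Type*} [CommRing R] (p : ℕ) [CharP R p] (a : R) :
    (X ^ p - X - C a).Separable := by
  have hder : derivative (X ^ p - X - C a) = -1 := by simp [derivative_X_pow]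
  rw [separable_def, hder]
  exact isCoprime_one_right.neg_right

section Galois

variable {p : ℕ} [Fact p.Prime] {F : Type*} [Field F] [CharP F p]

theorem isSeparable_of_artinSchreier_eq {L : Type*} [Field L] [Algebra F L] [CharP L p] {x : L}
    {a : F} (h : artinSchreier L p x = algebraMap F L a) : IsSeparable F x :=
  (separable_X_pow_sub_X_sub_C p a).of_dvd <| minpoly.dvd F x <| by
    simpa [sub_eq_zero] using h

theorem isGalois_adjoin_range {K : Type*} [Field K] [Algebra F K] [CharP K p] [Normal F K]
    {ι : Type*} {a : ι → F} {r : ι → K}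
    (hr : ∀ i, artinSchreier K p (r i) = algebraMap F K (a i)) :
    IsGalois F (adjoin F (Set.range r)) := by
  rw [isGalois_iff, isSeparable_adjoin_iff_isSeparable, normal_iff_forall_map_le]
  refine ⟨Set.forall_mem_range.2 fun i ↦ isSeparable_of_artinSchreier_eq (hr i), fun σ ↦ ?_⟩
  rw [adjoin_map, adjoin_le_iff, ← Set.range_comp]
  rintro _ ⟨i, rfl⟩
  obtain ⟨k, hk⟩ := exists_eq_add_of_artinSchreier_eq (x := r i) (y := σ (r i))
    (by rw [← map_artinSchreier, hr, AlgHom.commutes])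
  rw [Function.comp_apply, hk, ← map_zmod_castHom (algebraMap F K)]
  exact add_mem (subset_adjoin F _ ⟨i, rfl⟩) (IntermediateField.algebraMap_mem _ _)

end Galois

theorem Submodule.eq_top_iff_forall_dotProduct_eq_zero {K ι : Type*} [Field K] [Fintype ι]
    {V : Submodule K (ι → K)} : V = ⊤ ↔ ∀ ν : ι → K, (∀ v ∈ V, ν ⬝ᵥ v = 0) → ν = 0 := by
  classical
  rw [← Submodule.dualAnnihilator_eq_bot_iff, Submodule.eq_bot_iff]
  refine ((dotProductEquiv K ι).toEquiv.forall_congr fun {ν} ↦ ?_).symm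
  simp [Submodule.mem_dualAnnihilator]

theorem AddSubgroup.eq_top_iff_forall_intCast_dotProduct_eq_zero {p : ℕ} [Fact p.Prime]
    {ι : Type*} [Fintype ι] {W : AddSubgroup (ι → ZMod p)} :
    W = ⊤ ↔ ∀ ν : ι → ℤ, (∀ w ∈ W, (Int.cast ∘ ν) ⬝ᵥ w = 0) → ∀ i, (p : ℤ) ∣ ν i := by
  rw [← map_eq_top_iff (AddSubgroup.toZModSubmodule p),
    Submodule.eq_top_iff_forall_dotProduct_eq_zero,
    (ZMod.intCast_surjective.comp_left (α := ι)).forall]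
  simp [funext_iff, ZMod.intCast_zmod_eq_zero_iff_dvd]

theorem MonoidHom.nonempty_mulEquiv_iff_surjective {G H : Type*} [MulOneClass G] [MulOneClass H]
    [Finite H] {f : G →* H} (hf : Function.Injective f) :
    Nonempty (G ≃* H) ↔ Function.Surjective f :=
  ⟨fun ⟨e⟩ ↦ (hf.bijective_of_nat_card_le (Nat.card_congr e.toEquiv).ge).2,
    fun hs ↦ ⟨MulEquiv.ofBijective f ⟨hf, hs⟩⟩⟩

section GaloisGroup

variable {p : ℕ} [Fact p.Prime] {F L : Type*} [Field F] [Field L] [Algebra F L] [CharP L p]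
  {ι : Type*} {a : ι → F} {x : ι → L} (hx : ∀ i, artinSchreier L p (x i) = algebraMap F L (a i))
include hx

theorem exists_algEquiv_apply_eq_add (σ : Gal(L/F)) (i : ι) :
    ∃ k : ZMod p, σ (x i) = x i + ZMod.castHom dvd_rfl L k :=
  exists_eq_add_of_artinSchreier_eq <| by
    rw [← AlgEquiv.coe_toAlgHom, ← map_artinSchreier, hx, AlgHom.commutes]

noncomputable def artinSchreierShift (σ : Gal(L/F)) (i : ι) : ZMod p :=
  (exists_algEquiv_apply_eq_add hx σ i).choose

theorem algEquiv_apply_eq_add_artinSchreierShift (σ : Gal(L/F)) (i : ι) :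
    σ (x i) = x i + ZMod.castHom dvd_rfl L (artinSchreierShift hx σ i) :=
  (exists_algEquiv_apply_eq_add hx σ i).choose_spec

theorem artinSchreierShift_eq {σ : Gal(L/F)} {i : ι} {k : ZMod p}
    (h : σ (x i) = x i + ZMod.castHom dvd_rfl L k) : artinSchreierShift hx σ i = k :=
  (ZMod.castHom dvd_rfl L).injective <| add_left_cancel <|
    (algEquiv_apply_eq_add_artinSchreierShift hx σ i).symm.trans h

noncomputable def artinSchreierHom : Gal(L/F) →* Multiplicative (ι → ZMod p) where
  toFun σ := .ofAdd (artinSchreierShift hx σ)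
  map_one' := by
    ext i
    exact artinSchreierShift_eq hx (by simp)
  map_mul' σ τ := by
    ext i
    refine artinSchreierShift_eq hx ?_
    rw [AlgEquiv.mul_apply, algEquiv_apply_eq_add_artinSchreierShift hx τ, map_add,
      algEquiv_apply_eq_add_artinSchreierShift hx σ, map_zmod_castHom, add_assoc, ← map_add]
    rfl

theorem artinSchreierHom_apply (σ : Gal(L/F)) :
    artinSchreierHom hx σ = .ofAdd (artinSchreierShift hx σ) := rfl

theorem artinSchreierHom_injective (hgen : adjoin F (Set.range x) = ⊤) :
    Function.Injective (artinSchreierHom hx) := by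
  refine (injective_iff_map_eq_one _).2 fun σ hσ ↦ ?_
  have hfix : ∀ i, σ (x i) = x i := fun i ↦ by
    rw [algEquiv_apply_eq_add_artinSchreierShift hx σ i, ← toAdd_ofAdd (artinSchreierShift hx σ),
      ← artinSchreierHom_apply, hσ]
    simp
  have := adjoin_algHom_ext F (φ₁ := (σ : L →ₐ[F] L).comp (adjoin F (Set.range x)).val)
    (φ₂ := (adjoin F (Set.range x)).val) (by rintro _ ⟨i, rfl⟩; exact hfix i)
  ext y
  exact congr($this ⟨y, hgen ▸ mem_top⟩)

theorem algEquiv_apply_sum_sub_sum [Fintype ι] (ν : ι → ℤ) (σ : Gal(L/F)) :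
    σ (∑ i, ν i • x i) - ∑ i, ν i • x i
      = ZMod.castHom dvd_rfl L ((Int.cast ∘ ν) ⬝ᵥ artinSchreierShift hx σ) := by
  simp only [zsmul_eq_mul, map_sum, map_mul, map_intCast, ← Finset.sum_sub_distrib,
    algEquiv_apply_eq_add_artinSchreierShift hx, mul_add, add_sub_cancel_left, dotProduct,
    Function.comp_apply]

theorem exists_sum_eq_artinSchreier_iff [CharP F p] [IsGalois F L] [Fintype ι] (ν : ι → ℤ) :
    (∃ b : F, ∑ i, ν i • a i = b ^ p - b) ↔
      ∀ σ : Gal(L/F), (Int.cast ∘ ν) ⬝ᵥ artinSchreierShift hx σ = 0 := by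
  set s := ∑ i, ν i • x i
  have hs : artinSchreier L p s = algebraMap F L (∑ i, ν i • a i) := by
    simp only [s, map_sum, map_zsmul, hx]
  have hfixed : (∀ σ : Gal(L/F), σ s = s) ↔
      ∀ σ : Gal(L/F), (Int.cast ∘ ν) ⬝ᵥ artinSchreierShift hx σ = 0 := forall_congr' fun σ ↦ by
    rw [← sub_eq_zero, algEquiv_apply_sum_sub_sum hx,
      map_eq_zero_iff _ (ZMod.castHom _ L).injective]
  rw [← hfixed, ← InfiniteGalois.mem_range_algebraMap_iff_fixed]
  constructor
  · rintro ⟨b, hb⟩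
    obtain ⟨k, hk⟩ := exists_eq_add_of_artinSchreier_eq (x := algebraMap F L b) (y := s)
      (by rw [hs, hb, ← map_artinSchreier, artinSchreier_apply])
    exact ⟨b + ZMod.castHom dvd_rfl F k, by rw [hk, map_add, map_zmod_castHom]⟩
  · rintro ⟨b, hb⟩
    refine ⟨b, (algebraMap F L).injective ?_⟩
    rw [← artinSchreier_apply, map_artinSchreier, hb, hs]

theorem artinSchreierHom_surjective_iff [CharP F p] [IsGalois F L] [Fintype ι] :
    Function.Surjective (artinSchreierHom hx) ↔
      ∀ ν : ι → ℤ, (∃ b : F, ∑ i, ν i • a i = b ^ p - b) → ∀ i, (p : ℤ) ∣ ν i := by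
  rw [← MonoidHom.range_eq_top, ← map_eq_top_iff Subgroup.toAddSubgroup',
    AddSubgroup.eq_top_iff_forall_intCast_dotProduct_eq_zero]
  refine forall_congr' fun ν ↦ imp_congr_left ?_
  rw [exists_sum_eq_artinSchreier_iff hx]
  simp only [Subgroup.mem_toAddSubgroup', MonoidHom.mem_range, artinSchreierHom_apply,
    EmbeddingLike.apply_eq_iff_eq, forall_exists_index]
  exact ⟨fun h σ ↦ h _ σ rfl, fun h _ σ hσ ↦ hσ ▸ h σ⟩

end GaloisGroup

/-- Artin–Schreier theory: over a field `F` of characteristic `p`, the extension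
`F(℘⁻¹a₁, …, ℘⁻¹aₙ)/F` has Galois group `(C_p)ⁿ` iff the classes of `a₁, …, aₙ` in the
additive group `F/℘(F)` are linearly independent over `𝔽_p`, where `℘(x) = x^p - x`. -/
theorem stmt_11 (p n : ℕ) (hp : p.Prime) (F : Type*) [Field F] [CharP F p]
    (a : Fin n → F) (r : Fin n → AlgebraicClosure F)
    (hr : ∀ i, r i ^ p - r i = algebraMap F (AlgebraicClosure F) (a i)) :
    (IsGalois F (adjoin F (Set.range r)) ∧
        Nonempty ((↥(adjoin F (Set.range r)) ≃ₐ[F] ↥(adjoin F (Set.range r)))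
          ≃* (Fin n → Multiplicative (ZMod p))))
      ↔ ∀ ν : Fin n → ℤ, (∃ b : F, ∑ i, ν i • a i = b ^ p - b) → ∀ i, (p : ℤ) ∣ ν i := by
  have := Fact.mk hp
  set E := adjoin F (Set.range r)
  have hGal : IsGalois F E := isGalois_adjoin_range (p := p) hr
  let x : Fin n → E := fun i ↦ ⟨r i, subset_adjoin F _ ⟨i, rfl⟩⟩
  have hx : ∀ i, artinSchreier E p (x i) = algebraMap F E (a i) :=
    fun i ↦ Subtype.val_injective (hr i)
  have hgen : adjoin F (Set.range x) = ⊤ :=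
    lift_injective E (by rw [lift_adjoin, lift_top, ← Set.range_comp]; rfl)
  let e := MulEquiv.funMultiplicative (Fin n) (ZMod p)
  rw [and_iff_right hGal, ← artinSchreierHom_surjective_iff hx,
    ← MonoidHom.nonempty_mulEquiv_iff_surjective (artinSchreierHom_injective hx hgen)]
  exact ⟨fun ⟨f⟩ ↦ ⟨f.trans e.symm⟩, fun ⟨f⟩ ↦ ⟨f.trans e⟩⟩
end
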